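/- Logarithmic-time descent to size √n: let θ ≥ 2 be an integer, p ∈ (0,1), δ = (1−p)/3, and let n, M be positive integers with M ≤ n. Let G be a simple graph on n vertices such that for every integer m with ⌈√n⌉ ≤ m ≤ M and every W ⊆ V with |W| = m one has |W^{*2}| ≤ (1+δ)m. Set T := ⌈ (log n) / log(1/(1−δ)) ⌉. Then for every initial set X₀ with |X₀| ≤ M, the threshold-θ contact process satisfies P( ∃ t ≤ T with |X_t| ≤ √n ) ≥ 1 − T · exp( −δ² √n / 3 ). -/

import Mathlib

/-!
While the infected set `X_t` has between `√n` and `M` vertices, `X_{t+1}` is a `p`-thinning of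
`X_t^{*θ} ⊆ X_t^{*2}`, a set of at most `(1 + δ)|X_t|` vertices, and the thinning uses fresh
uniform variables independent of `X_t`. Since `p = 1 - 3δ`, the Chernoff bound with parameter
`δ` shows that `|X_{t+1}| > (1 - δ)|X_t|` has probability at most `exp(-δ²√n/3)`. Outside these
`T` bad events `|X_t| ≤ (1 - δ)^t M` as long as `|X_t| > √n`, and `(1 - δ)^T n ≤ 1` by the choice
of `T`, so the process reaches size `√n` by time `T`; a union bound over `t < T` finishes.
-/

open MeasureTheory ProbabilityTheory

/-- For `W ⊆ V`, `starSet G l W = W^{*l}` is the set of vertices having at least `l`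
neighbors in `W`. -/
noncomputable def starSet {V : Type*} [Fintype V] (G : SimpleGraph V) (l : ℕ)
    (W : Finset V) : Finset V :=
  letI := Classical.dec
  Finset.univ.filter fun v => l ≤ (W.filter fun u => G.Adj v u).card

/-- The discrete-time threshold-`θ` contact process with infection probability `p` and initial
infected set `X0`, driven by the field `ω` of `[0,1]`-valued random variables:
`X_{t+1} = {v ∈ (X_t)^{*θ} : ω(t+1, v) ≤ p}`. -/
noncomputable def tcp {V : Type*} [Fintype V] (G : SimpleGraph V) (θ : ℕ) (p : ℝ)
    (X0 : Finset V) (ω : ℕ × V → ℝ) : ℕ → Finset V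
  | 0 => X0
  | t + 1 =>
      letI := Classical.dec
      (starSet G θ (tcp G θ p X0 ω t)).filter fun v => ω (t + 1, v) ≤ p

/-- `P` is the law of an i.i.d. field of Uniform`[0,1]` random variables indexed by `ℕ × V`,
i.e. the infinite product of uniform measures on `[0,1]`: the coordinate maps are independent
and each is uniformly distributed on `[0,1]`. -/
def IsIIDUniform {V : Type*} (P : Measure ((ℕ × V) → ℝ)) : Prop :=
  IsProbabilityMeasure P ∧
    iIndepFun (fun i ω => ω i) P ∧
    ∀ i : ℕ × V, P.map (fun ω => ω i) = volume.restrict (Set.Icc (0 : ℝ) 1)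

open Finset

lemma mgf_ite_le_uniformIcc {p t : ℝ} (hp0 : 0 ≤ p) (hp1 : p ≤ 1) :
    mgf (fun x : ℝ => if x ≤ p then (1 : ℝ) else 0) (volume.restrict (Set.Icc (0 : ℝ) 1)) t
      = 1 + p * (Real.exp t - 1) := by
  have hexp : (fun x : ℝ => Real.exp (t * if x ≤ p then 1 else 0))
      = fun x => 1 + (Set.Iic p).indicator (fun _ => Real.exp t - 1) x := by
    funext x
    by_cases h : x ≤ p <;> simp [h]
  have hIic : Set.Iic p ∩ Set.Icc (0 : ℝ) 1 = Set.Icc 0 p := by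
    ext x
    simp only [Set.mem_inter_iff, Set.mem_Iic, Set.mem_Icc]
    constructor
    · rintro ⟨hxp, hx0, -⟩; exact ⟨hx0, hxp⟩
    · rintro ⟨hx0, hxp⟩; exact ⟨hxp, hx0, hxp.trans hp1⟩
  rw [mgf, hexp, integral_add (integrable_const _)
    ((integrable_const _).indicator measurableSet_Iic), integral_const,
    integral_indicator measurableSet_Iic, setIntegral_const,
    measureReal_restrict_apply measurableSet_Iic, hIic]
  simp [hp0]

lemma chernoff_exponent_le {δ : ℝ} (hδ0 : 0 ≤ δ) (hδ3 : 3 * δ ≤ 1) :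
    (1 + δ) * (1 - 3 * δ) * (Real.exp δ - 1) ≤ δ * (1 - δ) - δ ^ 2 / 3 := by
  have hexp : Real.exp δ - 1 ≤ δ + δ ^ 2 / 2 + 2 / 9 * δ ^ 3 := by
    have h := Real.exp_bound' hδ0 (by linarith) (n := 3) (by norm_num)
    norm_num [Finset.sum_range_succ, Nat.factorial] at h
    linarith
  have hco : 0 ≤ (1 + δ) * (1 - 3 * δ) := by nlinarith
  nlinarith [mul_le_mul_of_nonneg_left hexp hco, pow_nonneg hδ0 3, pow_nonneg hδ0 4,
    pow_nonneg hδ0 5]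

section Chernoff

variable {Ω V : Type*} [MeasurableSpace Ω] {P : Measure Ω} {X : V → Ω → ℝ}

lemma measureReal_card_filter_ge_le (hXm : ∀ v, Measurable (X v)) (hX : iIndepFun X P)
    (hlaw : ∀ v, P.map (X v) = volume.restrict (Set.Icc 0 1)) {p : ℝ} (hp0 : 0 ≤ p)
    (hp1 : p ≤ 1) (S : Finset V) {t : ℝ} (ht : 0 ≤ t) (a : ℝ) :
    P.real {ω | a ≤ (#(S.filter fun v => X v ω ≤ p) : ℝ)}
      ≤ Real.exp (-t * a) * (1 + p * (Real.exp t - 1)) ^ #S := by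
  have := hX.isProbabilityMeasure
  set g : ℝ → ℝ := fun x => if x ≤ p then 1 else 0
  have hg : Measurable g := Measurable.ite measurableSet_Iic measurable_const measurable_const
  have hgX : ∀ v, Measurable (g ∘ X v) := fun v => hg.comp (hXm v)
  have hindep : iIndepFun (fun v => g ∘ X v) P := hX.comp (fun _ => g) fun _ => hg
  have hcount : ∀ ω, (#(S.filter fun v => X v ω ≤ p) : ℝ) = (∑ v ∈ S, g ∘ X v) ω := by
    intro ω
    rw [Finset.card_filter, Finset.sum_apply]
    push_cast
    rfl
  have hmgf : ∀ v, mgf (g ∘ X v) P t = 1 + p * (Real.exp t - 1) := fun v => by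
    rw [← mgf_map (hXm v).aemeasurable, hlaw v, mgf_ite_le_uniformIcc hp0 hp1]
    exact (hg.const_mul t).exp.aestronglyMeasurable
  have hint : ∀ v ∈ S, Integrable (fun ω => Real.exp (t * (g ∘ X v) ω)) P := fun v _ => by
    refine Integrable.of_bound ((hgX v).const_mul t).exp.aestronglyMeasurable (Real.exp t)
      (ae_of_all _ fun ω => ?_)
    rw [Real.norm_eq_abs, abs_of_pos (Real.exp_pos _), Real.exp_le_exp]
    by_cases h : X v ω ≤ p <;> simp [g, h, ht]
  calc P.real {ω | a ≤ (#(S.filter fun v => X v ω ≤ p) : ℝ)}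
      = P.real {ω | a ≤ (∑ v ∈ S, g ∘ X v) ω} := by simp_rw [hcount]
    _ ≤ Real.exp (-t * a) * mgf (∑ v ∈ S, g ∘ X v) P t :=
      measure_ge_le_exp_mul_mgf a ht (hindep.integrable_exp_mul_sum hgX hint)
    _ = Real.exp (-t * a) * (1 + p * (Real.exp t - 1)) ^ #S := by
      rw [hindep.mgf_sum hgX, Finset.prod_congr rfl fun v _ => hmgf v, Finset.prod_const]

lemma measure_card_filter_gt_le (hXm : ∀ v, Measurable (X v)) (hX : iIndepFun X P)
    (hlaw : ∀ v, P.map (X v) = volume.restrict (Set.Icc 0 1)) {p δ : ℝ} (hδ : 0 < δ)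
    (hp0 : 0 ≤ p) (hpδ : p ≤ 1 - 3 * δ) {S : Finset V} {m : ℝ} (hm : 0 ≤ m)
    (hS : (#S : ℝ) ≤ (1 + δ) * m) :
    P {ω | (1 - δ) * m < (#(S.filter fun v => X v ω ≤ p) : ℝ)}
      ≤ ENNReal.ofReal (Real.exp (-δ ^ 2 * m / 3)) := by
  have := hX.isProbabilityMeasure
  have hexp : 0 ≤ Real.exp δ - 1 := by linarith [Real.add_one_le_exp δ]
  have hpow : (1 + p * (Real.exp δ - 1)) ^ #S
      ≤ Real.exp ((1 + δ) * m * ((1 - 3 * δ) * (Real.exp δ - 1))) :=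
    calc (1 + p * (Real.exp δ - 1)) ^ #S ≤ Real.exp (p * (Real.exp δ - 1)) ^ #S := by
          gcongr
          linarith [Real.add_one_le_exp (p * (Real.exp δ - 1))]
      _ = Real.exp (#S * (p * (Real.exp δ - 1))) := by rw [← Real.exp_nat_mul]
      _ ≤ Real.exp ((1 + δ) * m * ((1 - 3 * δ) * (Real.exp δ - 1))) := by gcongr
  have hexponent : -δ * ((1 - δ) * m) + (1 + δ) * m * ((1 - 3 * δ) * (Real.exp δ - 1))
      ≤ -δ ^ 2 * m / 3 := by
    nlinarith [mul_le_mul_of_nonneg_left (chernoff_exponent_le hδ.le (by linarith)) hm]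
  calc P {ω | (1 - δ) * m < (#(S.filter fun v => X v ω ≤ p) : ℝ)}
      ≤ P {ω | (1 - δ) * m ≤ (#(S.filter fun v => X v ω ≤ p) : ℝ)} :=
        measure_mono (Set.ofPred_subset_ofPred.2 fun _ => le_of_lt)
    _ = ENNReal.ofReal (P.real {ω | (1 - δ) * m ≤ (#(S.filter fun v => X v ω ≤ p) : ℝ)}) :=
        (ofReal_measureReal (measure_ne_top _ _)).symm
    _ ≤ ENNReal.ofReal (Real.exp (-δ ^ 2 * m / 3)) := by
        gcongr
        refine (measureReal_card_filter_ge_le hXm hX hlaw hp0 (by linarith) S hδ.le _).trans ?_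
        calc Real.exp (-δ * ((1 - δ) * m)) * (1 + p * (Real.exp δ - 1)) ^ #S
            ≤ Real.exp (-δ * ((1 - δ) * m))
              * Real.exp ((1 + δ) * m * ((1 - 3 * δ) * (Real.exp δ - 1))) := by gcongr
          _ ≤ Real.exp (-δ ^ 2 * m / 3) := by rw [← Real.exp_add]; gcongr

end Chernoff

section Coordinates

variable {ι : Type*}

abbrev coordMeasurableSpace (S : Set ι) : MeasurableSpace (ι → ℝ) :=
  ⨆ i ∈ S, MeasurableSpace.comap (fun ω : ι → ℝ => ω i) inferInstance

lemma measurable_apply_coordMeasurableSpace {S : Set ι} {i : ι} (hi : i ∈ S) :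
    Measurable[coordMeasurableSpace S] fun ω : ι → ℝ => ω i :=
  Measurable.of_comap_le <|
    le_iSup₂ (f := fun i (_ : i ∈ S) => MeasurableSpace.comap (fun ω : ι → ℝ => ω i) _) i hi

lemma indep_coordMeasurableSpace {P : Measure (ι → ℝ)} (hP : iIndepFun (fun i ω => ω i) P)
    {S T : Set ι} (hST : Disjoint S T) :
    Indep (coordMeasurableSpace S) (coordMeasurableSpace T) P :=
  indep_iSup_of_disjoint (fun i => (measurable_pi_apply i).comap_le)
    ((iIndepFun_iff_iIndep _ _ _).1 hP) hST

end Coordinates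

lemma measure_setOf_mem_le_of_fiber {Ω α : Type*} [MeasurableSpace Ω] [Fintype α]
    [MeasurableSpace α] [MeasurableSingletonClass α] {P : Measure Ω} [IsProbabilityMeasure P]
    {f : Ω → α} (hf : Measurable f) (C : α → Set Ω) {ε : ENNReal}
    (hC : ∀ a, P (f ⁻¹' {a} ∩ C a) ≤ P (f ⁻¹' {a}) * ε) :
    P {ω | ω ∈ C (f ω)} ≤ ε :=
  calc P {ω | ω ∈ C (f ω)} = P (⋃ a, f ⁻¹' {a} ∩ C a) := by congr 1; ext ω; simp
    _ ≤ ∑ a, P (f ⁻¹' {a} ∩ C a) := measure_iUnion_fintype_le P _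
    _ ≤ ∑ a, P (f ⁻¹' {a}) * ε := Finset.sum_le_sum fun a _ => hC a
    _ = ε := by
      rw [← Finset.sum_mul,
        sum_measure_preimage_singleton _ fun a _ => hf (measurableSet_singleton a)]
      simp

lemma exists_le_of_contracting {x : ℕ → ℝ} {r s M : ℝ} {T : ℕ} (hr0 : 0 ≤ r) (hr1 : r ≤ 1)
    (hM : 0 ≤ M) (hx0 : x 0 ≤ M) (hstep : ∀ t < T, s < x t → x t ≤ M → x (t + 1) ≤ r * x t)
    (hT : r ^ T * M ≤ s) :
    ∃ t ≤ T, x t ≤ s := by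
  by_contra! hlarge
  have hdecay : ∀ t ≤ T, x t ≤ r ^ t * M := by
    intro t ht
    induction t with
    | zero => simpa using hx0
    | succ t ih =>
      have ih := ih (by omega)
      calc x (t + 1)
          ≤ r * x t := hstep t (by omega) (hlarge t (by omega))
            (ih.trans (mul_le_of_le_one_left hM (pow_le_one₀ hr0 hr1)))
        _ ≤ r * (r ^ t * M) := by gcongr
        _ = r ^ (t + 1) * M := by ring
  exact (hlarge T le_rfl).not_ge ((hdecay T le_rfl).trans hT)

lemma pow_ceil_log_div_log_inv_mul_le_one {r x : ℝ} (hr0 : 0 < r) (hr1 : r < 1) (hx : 0 < x) :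
    r ^ ⌈Real.log x / Real.log (1 / r)⌉₊ * x ≤ 1 := by
  set T := ⌈Real.log x / Real.log (1 / r)⌉₊
  have hlogr : Real.log r < 0 := Real.log_neg hr0 hr1
  have hlog : Real.log x ≤ T * Real.log (1 / r) :=
    (div_le_iff₀ (by rw [one_div, Real.log_inv]; linarith)).1 (Nat.le_ceil _)
  rw [one_div, Real.log_inv] at hlog
  calc r ^ T * x = Real.exp (T * Real.log r + Real.log x) := by
        rw [Real.exp_add, Real.exp_nat_mul, Real.exp_log hr0, Real.exp_log hx]
    _ ≤ Real.exp 0 := by gcongr; linarith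
    _ = 1 := Real.exp_zero

lemma ofReal_one_sub_mul_le_measure {Ω : Type*} [MeasurableSpace Ω] {P : Measure Ω}
    [IsProbabilityMeasure P] {E : Set Ω} {B : ℕ → Set Ω} {T : ℕ} {ε : ℝ} (hε : 0 ≤ ε)
    (hcover : Eᶜ ⊆ ⋃ t ∈ range T, B t) (hB : ∀ t, P (B t) ≤ ENNReal.ofReal ε) :
    ENNReal.ofReal (1 - T * ε) ≤ P E := by
  have hcompl : P Eᶜ ≤ ENNReal.ofReal (T * ε) :=
    calc P Eᶜ ≤ ∑ t ∈ range T, P (B t) :=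
          (measure_mono hcover).trans (measure_biUnion_finset_le _ _)
      _ ≤ ∑ t ∈ range T, ENNReal.ofReal ε := sum_le_sum fun t _ => hB t
      _ = ENNReal.ofReal (T * ε) := by
          rw [sum_const, card_range, nsmul_eq_mul, ENNReal.ofReal_mul (Nat.cast_nonneg T),
            ENNReal.ofReal_natCast]
  rw [ENNReal.ofReal_sub 1 (by positivity), ENNReal.ofReal_one, tsub_le_iff_right]
  calc 1 = P Set.univ := measure_univ.symm
    _ ≤ P E + P Eᶜ := measure_univ_le_add_compl E
    _ ≤ P E + ENNReal.ofReal (T * ε) := by gcongr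

section Contact

variable {V : Type*} [Fintype V] (G : SimpleGraph V) (θ : ℕ) (p : ℝ) (X0 : Finset V)

lemma starSet_subset_of_le {l k : ℕ} (hlk : l ≤ k) (W : Finset V) :
    starSet G k W ⊆ starSet G l W := by
  intro v hv
  simp only [starSet, Finset.mem_filter, Finset.mem_univ, true_and] at hv ⊢
  exact hlk.trans hv

omit [Fintype V] in
lemma measurable_filter_le {Ω : Type*} {m : MeasurableSpace Ω} {S : Ω → Finset V}
    (hS : Measurable S) {Y : V → Ω → ℝ} (hY : ∀ v, Measurable (Y v)) :
    Measurable fun ω => (S ω).filter fun v => Y v ω ≤ p := by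
  refine measurable_finset_iff.2 fun v => ?_
  simp only [Finset.mem_filter]
  exact ((measurable_finset_mem v).comp hS).and (measurableSet_le (hY v) measurable_const).mem

lemma measurable_tcp {m : MeasurableSpace ((ℕ × V) → ℝ)} {t : ℕ}
    (hm : ∀ s ≤ t, ∀ v, Measurable[m] fun ω => ω (s, v)) :
    Measurable[m] fun ω => tcp G θ p X0 ω t := by
  induction t with
  | zero => exact measurable_const
  | succ t ih =>
    exact measurable_filter_le p ((Measurable.of_discrete (f := starSet G θ)).comp
      (ih fun s hs => hm s (hs.trans t.le_succ))) (hm (t + 1) le_rfl)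

lemma measure_tcp_not_contracting_le {δ s M : ℝ} (hδ : 0 < δ) (hp0 : 0 ≤ p)
    (hpδ : p ≤ 1 - 3 * δ)
    (hexpansion : ∀ W : Finset V, s < #W → (#W : ℝ) ≤ M → (#(starSet G θ W) : ℝ) ≤ (1 + δ) * #W)
    {P : Measure ((ℕ × V) → ℝ)} (hP : IsIIDUniform P) (t : ℕ) :
    P {ω | s < #(tcp G θ p X0 ω t) ∧ (#(tcp G θ p X0 ω t) : ℝ) ≤ M ∧
        (1 - δ) * #(tcp G θ p X0 ω t) < #(tcp G θ p X0 ω (t + 1))}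
      ≤ ENNReal.ofReal (Real.exp (-δ ^ 2 * s / 3)) := by
  obtain ⟨hprob, hindep, hlaw⟩ := hP
  set past : Set (ℕ × V) := {i | i.1 ≤ t}
  set next : Set (ℕ × V) := {i | i.1 = t + 1}
  have hpast : Disjoint past next :=
    Set.disjoint_left.2 fun i (hi : i.1 ≤ t) (hi' : i.1 = t + 1) => by omega
  refine measure_setOf_mem_le_of_fiber (measurable_tcp G θ p X0 fun s _ v => measurable_pi_apply _)
    (fun W => {ω | s < #W ∧ (#W : ℝ) ≤ M ∧
      (1 - δ) * #W < #((starSet G θ W).filter fun v => ω (t + 1, v) ≤ p)}) fun W => ?_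
  by_cases hW : s < #W ∧ (#W : ℝ) ≤ M
  swap
  · exact (measure_mono_null (fun ω hω => absurd ⟨hω.2.1, hω.2.2.1⟩ hW) measure_empty).trans_le
      zero_le
  set D := {ω : (ℕ × V) → ℝ | (1 - δ) * #W < #((starSet G θ W).filter fun v => ω (t + 1, v) ≤ p)}
  have hA : MeasurableSet[coordMeasurableSpace past] ((fun ω => tcp G θ p X0 ω t) ⁻¹' {W}) :=
    measurable_tcp G θ p X0 (fun s hs v => measurable_apply_coordMeasurableSpace (i := (s, v)) hs)
      (measurableSet_singleton W)
  have hD : MeasurableSet[coordMeasurableSpace next] D :=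
    measurableSet_lt measurable_const
      ((Measurable.of_discrete (f := fun F : Finset V => (#F : ℝ))).comp
        (measurable_filter_le p measurable_const fun v =>
          measurable_apply_coordMeasurableSpace (i := (t + 1, v)) rfl))
  have hPD : P D ≤ ENNReal.ofReal (Real.exp (-δ ^ 2 * s / 3)) := by
    refine (measure_card_filter_gt_le (fun v => measurable_pi_apply _)
      (hindep.precomp (Prod.mk_right_injective (t + 1))) (fun v => hlaw _) hδ hp0 hpδ
      (Nat.cast_nonneg _) (hexpansion W hW.1 hW.2)).trans ?_
    refine ENNReal.ofReal_le_ofReal (Real.exp_le_exp.2 ?_)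
    nlinarith [mul_le_mul_of_nonneg_left hW.1.le (sq_nonneg δ)]
  calc _ ≤ P ((fun ω => tcp G θ p X0 ω t) ⁻¹' {W} ∩ D) :=
        measure_mono (Set.inter_subset_inter_right _ fun ω hω => hω.2.2)
    _ = P ((fun ω => tcp G θ p X0 ω t) ⁻¹' {W}) * P D :=
        (Indep_iff _ _ P).1 (indep_coordMeasurableSpace hindep hpast) _ _ hA hD
    _ ≤ _ := by gcongr

end Contact

theorem tcp_descent_to_sqrt_general {V : Type*} [Fintype V] (G : SimpleGraph V)
    (θ : ℕ) (hθ : 2 ≤ θ) (p : ℝ) (hp : p ∈ Set.Ioo (0 : ℝ) 1)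
    (n M : ℕ) (hn0 : 0 < n) (hMn : M ≤ n)
    (hW : ∀ m : ℕ, ⌈Real.sqrt n⌉₊ ≤ m → m ≤ M → ∀ W : Finset V, W.card = m →
      ((starSet G 2 W).card : ℝ) ≤ (1 + (1 - p) / 3) * m)
    (X0 : Finset V) (hX0 : X0.card ≤ M)
    (P : Measure ((ℕ × V) → ℝ)) (hP : IsIIDUniform P) :
    ENNReal.ofReal (1 - (⌈Real.log n / Real.log (1 / (1 - (1 - p) / 3))⌉₊ : ℝ) *
        Real.exp (-((1 - p) / 3) ^ 2 * Real.sqrt n / 3)) ≤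
      P {ω | ∃ t ≤ ⌈Real.log n / Real.log (1 / (1 - (1 - p) / 3))⌉₊,
          ((tcp G θ p X0 ω t).card : ℝ) ≤ Real.sqrt n} := by
  have := hP.1
  obtain ⟨hp0, hp1⟩ := hp
  set δ := (1 - p) / 3 with hδ
  set T := ⌈Real.log n / Real.log (1 / (1 - δ))⌉₊
  have hexpansion (W : Finset V) (hsW : Real.sqrt n < #W) (hWM : (#W : ℝ) ≤ M) :
      (#(starSet G θ W) : ℝ) ≤ (1 + δ) * #W :=
    (Nat.cast_le.2 (card_le_card (starSet_subset_of_le G hθ W))).trans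
      (hW _ (Nat.ceil_le.2 hsW.le) (by exact_mod_cast hWM) W rfl)
  have hT : (1 - δ) ^ T * M ≤ Real.sqrt n :=
    calc (1 - δ) ^ T * M ≤ (1 - δ) ^ T * n :=
          mul_le_mul_of_nonneg_left (by exact_mod_cast hMn) (pow_nonneg (by linarith) T)
      _ ≤ 1 := pow_ceil_log_div_log_inv_mul_le_one (by linarith) (by linarith)
          (by exact_mod_cast hn0)
      _ ≤ Real.sqrt n := Real.one_le_sqrt.2 (by exact_mod_cast hn0)
  have hcover : {ω | ∃ t ≤ T, (#(tcp G θ p X0 ω t) : ℝ) ≤ Real.sqrt n}ᶜ ⊆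
      ⋃ t ∈ range T, {ω | Real.sqrt n < #(tcp G θ p X0 ω t) ∧ (#(tcp G θ p X0 ω t) : ℝ) ≤ M ∧
        (1 - δ) * #(tcp G θ p X0 ω t) < #(tcp G θ p X0 ω (t + 1))} := by
    intro ω hω
    by_contra! hcontract
    simp only [Set.mem_iUnion, mem_range, not_exists] at hcontract
    exact hω (exists_le_of_contracting (by linarith) (by linarith) (Nat.cast_nonneg M)
      (by exact_mod_cast hX0) (fun t ht hs hM => not_lt.1 fun h => hcontract t ht ⟨hs, hM, h⟩) hT)
  exact ofReal_one_sub_mul_le_measure (Real.exp_pos _).le hcover fun t =>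
    measure_tcp_not_contracting_le G θ p X0 (by linarith) hp0.le (by linarith) hexpansion hP t

/-- Logarithmic-time descent to size `√n`: with `δ = (1-p)/3` and
`T = ⌈log n / log(1/(1-δ))⌉`, on a graph where all sets of sizes between `⌈√n⌉` and `M` have
`2`-expansion at most `(1+δ)`, the threshold-`θ` contact process started from at most `M`
infected vertices reaches size at most `√n` by time `T` with probability at least
`1 - T·exp(-δ²√n/3)`. -/
theorem tcp_descent_to_sqrt {V : Type*} [Fintype V] (G : SimpleGraph V)
    (θ : ℕ) (hθ : 2 ≤ θ) (p : ℝ) (hp : p ∈ Set.Ioo (0 : ℝ) 1)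
    (n M : ℕ) (hn : Fintype.card V = n) (hn0 : 0 < n) (hM0 : 0 < M) (hMn : M ≤ n)
    (hW : ∀ m : ℕ, ⌈Real.sqrt n⌉₊ ≤ m → m ≤ M → ∀ W : Finset V, W.card = m →
      ((starSet G 2 W).card : ℝ) ≤ (1 + (1 - p) / 3) * m)
    (X0 : Finset V) (hX0 : X0.card ≤ M)
    (P : Measure ((ℕ × V) → ℝ)) (hP : IsIIDUniform P) :
    ENNReal.ofReal (1 - (⌈Real.log n / Real.log (1 / (1 - (1 - p) / 3))⌉₊ : ℝ) *
        Real.exp (-((1 - p) / 3) ^ 2 * Real.sqrt n / 3)) ≤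
      P {ω | ∃ t ≤ ⌈Real.log n / Real.log (1 / (1 - (1 - p) / 3))⌉₊,
          ((tcp G θ p X0 ω t).card : ℝ) ≤ Real.sqrt n} :=
  tcp_descent_to_sqrt_general G θ hθ p hp n M hn0 hMn hW X0 hX0 P hP
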